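/- Suppose k is odd and set s = (k−1)/2. If a is odd with 3 ≤ a ≤ r−2, then z^{(a)}_s = z^{(a)}_{s+1}. -/

import Mathlib

/-- Orthogonal coordinates `u_i(λ)` of `λ + ρ` for the weight
`λ = λ_1 ω_1 + ⋯ + λ_r ω_r` of `D_r` given in fundamental-weight coordinates. -/
noncomputable def uCoord (r : ℕ) (lam : ℕ → ℤ) (i : ℕ) : ℝ :=
  if i = r then ((lam r : ℝ) - (lam (r - 1) : ℝ)) / 2
  else (∑ j ∈ Finset.Icc i (r - 2), (lam j : ℝ))
      + ((lam (r - 1) : ℝ) + (lam r : ℝ)) / 2 + ((r : ℝ) - (i : ℝ))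

/-- The level-`k` quantum dimension of the weight `λ` of `D_r`
(`h = 2r - 2` is the Coxeter number), given by the product over the
positive roots `e_i - e_j`, `e_i + e_j` (`1 ≤ i < j ≤ r`). -/
noncomputable def qdimD (r k : ℕ) (lam : ℕ → ℤ) : ℝ :=
  ∏ p ∈ (Finset.Icc 1 r ×ˢ Finset.Icc 1 r).filter (fun p => p.1 < p.2),
    (Real.sin (Real.pi * (uCoord r lam p.1 - uCoord r lam p.2) / (2 * (r : ℝ) - 2 + (k : ℝ)))
      * Real.sin (Real.pi * (uCoord r lam p.1 + uCoord r lam p.2) / (2 * (r : ℝ) - 2 + (k : ℝ))))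
    / (Real.sin (Real.pi * ((p.2 : ℝ) - (p.1 : ℝ)) / (2 * (r : ℝ) - 2 + (k : ℝ)))
      * Real.sin (Real.pi * (2 * (r : ℝ) - (p.1 : ℝ) - (p.2 : ℝ)) / (2 * (r : ℝ) - 2 + (k : ℝ))))

/-- The quantum dimension solution `z^{(a)}_m` of the `Q`-system of type `D_r`:
the specialization `Q^{(a)}_m(ρ/(h+k))` of the classical characters of the
Kirillov–Reshetikhin modules of type `D_r`. -/
noncomputable def zD (r k a m : ℕ) : ℝ :=
  if a = r - 1 ∨ a = r then
    qdimD r k (fun j => if j = a then (m : ℤ) else 0)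
  else if a % 2 = 1 then
    ∑ c ∈ (Fintype.piFinset (fun _ : Fin ((a + 1) / 2) => Finset.range (m + 1))).filter
        (fun c => ∑ i, c i = m),
      qdimD r k (fun j => ∑ i : Fin ((a + 1) / 2), if j = 2 * (i : ℕ) + 1 then (c i : ℤ) else 0)
  else
    ∑ c ∈ (Fintype.piFinset (fun _ : Fin (a / 2) => Finset.range (m + 1))).filter
        (fun c => ∑ i, c i ≤ m),
      qdimD r k (fun j => ∑ i : Fin (a / 2), if j = 2 * (i : ℕ) + 2 then (c i : ℤ) else 0)

/-!
For odd `a ≤ r - 2` the weights `k₁ω₁ + k₃ω₃ + ⋯ + k_aω_a` have `u₁ = Σ kᵢ + r - 1` and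
`u₂ = Σ kᵢ - k₁ + r - 2`, while `u_j` for `j ≥ 2` does not see `k₁`. Put `N = h + k = 2s + 2r - 1`.
In `z_{s+1}` the terms with `k₁ = 0` have `u₁ + u₂ = N`, so the factor `sin (π (u₁ + u₂) / N)` of
the root `e₁ + e₂` vanishes. The remaining terms correspond to the terms of `z_s` by lowering `k₁`
by one, which replaces `u₁` by `N - u₁`; the quantum dimension is invariant under this reflection
because `sin (π - θ) = sin θ` swaps the factors of the roots `e₁ - e_j` and `e₁ + e_j`.
-/

open Finset Finset.Nat

lemma filter_piFinset_range_sum_eq_antidiagonalTuple (t m : ℕ) :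
    (Fintype.piFinset fun _ : Fin t => range (m + 1)).filter (fun c => ∑ i, c i = m)
      = antidiagonalTuple t m := by
  ext c
  simp only [mem_filter, Fintype.mem_piFinset, mem_range, mem_antidiagonalTuple,
    and_iff_right_iff_imp]
  rintro rfl i
  exact Nat.lt_succ_of_le (single_le_sum (fun _ _ => Nat.zero_le _) (mem_univ i))

lemma sum_add_pi_single {ι M : Type*} [Fintype ι] [DecidableEq ι] [AddCommMonoid M]
    (c : ι → M) (i : ι) (x : M) : ∑ l, (c + Pi.single i x : ι → M) l = ∑ l, c l + x := by
  simp [sum_add_distrib]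

lemma sum_antidiagonalTuple_succ_of_vanish {M : Type*} [AddCommMonoid M] {t : ℕ} [NeZero t]
    (n : ℕ) (f : (Fin t → ℕ) → M)
    (hf : ∀ c ∈ antidiagonalTuple t (n + 1), c 0 = 0 → f c = 0) :
    ∑ c ∈ antidiagonalTuple t (n + 1), f c
      = ∑ c ∈ antidiagonalTuple t n, f (c + Pi.single 0 1) := by
  have sub_add_single {c : Fin t → ℕ} (hc : c 0 ≠ 0) : c - Pi.single 0 1 + Pi.single 0 1 = c := by
    ext i
    rcases eq_or_ne i 0 with rfl | hi
    · simp only [Pi.add_apply, Pi.sub_apply, Pi.single_eq_same]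
      omega
    · simp [Pi.single_eq_of_ne hi]
  rw [← sum_filter_of_ne fun c hc hfc hc0 => hfc (hf c hc hc0)]
  refine sum_nbij' (· - Pi.single 0 1) (· + Pi.single 0 1) ?_ ?_ ?_ ?_ ?_
  · intro c hc
    simp only [mem_filter, mem_antidiagonalTuple] at hc ⊢
    have := sum_add_pi_single (c - Pi.single 0 1) 0 1
    rw [sub_add_single hc.2] at this
    omega
  · intro c hc
    rw [mem_antidiagonalTuple] at hc
    exact mem_filter.2 ⟨mem_antidiagonalTuple.2 (by rw [sum_add_pi_single, hc]), by simp⟩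
  · intro c hc
    exact sub_add_single (mem_filter.1 hc).2
  · intro c _
    ext i
    simp
  · intro c hc
    rw [sub_add_single (mem_filter.1 hc).2]

lemma sin_reflect_mul_sin_reflect (N x y : ℝ) :
    Real.sin (Real.pi * ((N - x) - y) / N) * Real.sin (Real.pi * ((N - x) + y) / N)
      = Real.sin (Real.pi * (x - y) / N) * Real.sin (Real.pi * (x + y) / N) := by
  rcases eq_or_ne N 0 with rfl | hN
  · simp
  have h1 : Real.pi * ((N - x) - y) / N = Real.pi - Real.pi * (x + y) / N := by
    field_simp; ring
  have h2 : Real.pi * ((N - x) + y) / N = Real.pi - Real.pi * (x - y) / N := by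
    field_simp; ring
  rw [h1, h2, Real.sin_pi_sub, Real.sin_pi_sub, mul_comm]

lemma qdimD_eq_of_uCoord_one_reflect {r k : ℕ} {lam lam' : ℕ → ℤ}
    (h1 : uCoord r lam' 1 = (2 * (r : ℝ) - 2 + (k : ℝ)) - uCoord r lam 1)
    (hj : ∀ j, 2 ≤ j → uCoord r lam' j = uCoord r lam j) :
    qdimD r k lam' = qdimD r k lam := by
  refine prod_congr rfl fun p hp => ?_
  simp only [mem_filter, mem_product, mem_Icc] at hp
  rcases eq_or_ne p.1 1 with hp1 | hp1
  · rw [hp1, h1, hj p.2 (by omega), sin_reflect_mul_sin_reflect]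
  · rw [hj p.1 (by omega), hj p.2 (by omega)]

lemma qdimD_eq_zero_of_uCoord_one_add_two {r k : ℕ} (hr : 2 ≤ r) {lam : ℕ → ℤ}
    (h : uCoord r lam 1 + uCoord r lam 2 = 2 * (r : ℝ) - 2 + (k : ℝ)) :
    qdimD r k lam = 0 := by
  refine prod_eq_zero (i := (1, 2)) (by simp only [mem_filter, mem_product, mem_Icc]; omega) ?_
  have sin_pi_mul_div_self (N : ℝ) : Real.sin (Real.pi * N / N) = 0 := by
    rcases eq_or_ne N 0 with rfl | hN
    · simp
    · rw [mul_div_cancel_right₀ _ hN, Real.sin_pi]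
  simp only [h, sin_pi_mul_div_self, mul_zero, zero_div]

lemma uCoord_congr {r i : ℕ} (hr : 3 ≤ r) (hi : 2 ≤ i) {lam lam' : ℕ → ℤ}
    (h : ∀ j, 2 ≤ j → lam' j = lam j) :
    uCoord r lam' i = uCoord r lam i := by
  have hsum : ∑ j ∈ Icc i (r - 2), (lam' j : ℝ) = ∑ j ∈ Icc i (r - 2), (lam j : ℝ) :=
    sum_congr rfl fun j hj => by rw [h j (by simp only [mem_Icc] at hj; omega)]
  simp only [uCoord, hsum, h r (by omega), h (r - 1) (by omega)]

/-- The weight `c₀ ω₁ + c₁ ω₃ + ⋯ + c_{t-1} ω_{2t-1}`. -/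
def oddWeight (t : ℕ) (c : Fin t → ℕ) (j : ℕ) : ℤ :=
  ∑ i : Fin t, if j = 2 * (i : ℕ) + 1 then (c i : ℤ) else 0

lemma zD_eq_sum_antidiagonalTuple {r k a : ℕ} (har : a ≤ r - 2) (haodd : a % 2 = 1) (m : ℕ) :
    zD r k a m
      = ∑ c ∈ antidiagonalTuple ((a + 1) / 2) m, qdimD r k (oddWeight ((a + 1) / 2) c) := by
  rw [zD, if_neg (by omega), if_pos haodd, filter_piFinset_range_sum_eq_antidiagonalTuple]
  rfl

section oddWeight

variable {t : ℕ} (c : Fin t → ℕ)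

lemma oddWeight_eq_zero {j : ℕ} (hj : 2 * t ≤ j) : oddWeight t c j = 0 :=
  sum_eq_zero fun i _ => if_neg (by have := i.isLt; omega)

lemma oddWeight_add_single_of_ne_one [NeZero t] {j : ℕ} (hj : j ≠ 1) :
    oddWeight t (c + Pi.single 0 1) j = oddWeight t c j := by
  refine sum_congr rfl fun i _ => ?_
  rcases eq_or_ne i 0 with rfl | hi
  · simp only [Fin.val_zero, mul_zero, zero_add, if_neg hj]
  · simp [Pi.single_eq_of_ne hi]

variable {r : ℕ} (ht : 2 * t + 1 ≤ r)
include ht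

lemma sum_Icc_oddWeight (i : ℕ) :
    ∑ j ∈ Icc i (r - 2), (oddWeight t c j : ℝ)
      = ∑ l : Fin t, if i ≤ 2 * (l : ℕ) + 1 then (c l : ℝ) else 0 := by
  simp only [oddWeight, Int.cast_sum, apply_ite (Int.cast : ℤ → ℝ), Int.cast_natCast,
    Int.cast_zero]
  rw [sum_comm]
  refine sum_congr rfl fun l _ => ?_
  rw [sum_ite_eq' (Icc i (r - 2)) (2 * (l : ℕ) + 1) (fun _ => (c l : ℝ))]
  have := l.isLt
  simp only [mem_Icc]
  congr 1
  simp only [eq_iff_iff]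
  omega

lemma uCoord_oddWeight {i : ℕ} (hi : i ≠ r) :
    uCoord r (oddWeight t c) i
      = (∑ l : Fin t, if i ≤ 2 * (l : ℕ) + 1 then (c l : ℝ) else 0) + ((r : ℝ) - i) := by
  rw [uCoord, if_neg hi, sum_Icc_oddWeight c ht, oddWeight_eq_zero c (by omega),
    oddWeight_eq_zero c (by omega)]
  simp

lemma uCoord_oddWeight_one [NeZero t] :
    uCoord r (oddWeight t c) 1 = (∑ l, (c l : ℝ)) + ((r : ℝ) - 1) := by
  rw [uCoord_oddWeight c ht (by have := NeZero.ne t; omega)]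
  simp

lemma qdimD_oddWeight_eq_zero [NeZero t] {k : ℕ} (hc0 : c 0 = 0) (hc : 2 * ∑ l, c l = k + 1) :
    qdimD r k (oddWeight t c) = 0 := by
  have := NeZero.ne t
  refine qdimD_eq_zero_of_uCoord_one_add_two (by omega) ?_
  have if_two_le (l : Fin t) : (if 2 ≤ 2 * (l : ℕ) + 1 then (c l : ℝ) else 0) = c l := by
    rcases eq_or_ne l 0 with rfl | hl
    · simp [hc0]
    · rw [if_pos (by have := Fin.val_ne_zero_iff.2 hl; omega)]
  have hcR : 2 * ∑ l, (c l : ℝ) = k + 1 := by exact_mod_cast hc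
  rw [uCoord_oddWeight_one c ht, uCoord_oddWeight c ht (by omega)]
  simp only [if_two_le]
  push_cast
  linarith

lemma qdimD_oddWeight_add_single [NeZero t] {k : ℕ} (hc : 2 * ∑ l, c l + 1 = k) :
    qdimD r k (oddWeight t (c + Pi.single 0 1)) = qdimD r k (oddWeight t c) := by
  refine qdimD_eq_of_uCoord_one_reflect ?_ fun j hj =>
    uCoord_congr (by have := NeZero.ne t; omega) hj fun j hj =>
      oddWeight_add_single_of_ne_one c (by omega)
  have hcR : 2 * ∑ l, (c l : ℝ) + 1 = k := by exact_mod_cast hc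
  have hsum : ∑ l, ((c + Pi.single 0 1 : Fin t → ℕ) l : ℝ) = ∑ l, (c l : ℝ) + 1 := by
    exact_mod_cast sum_add_pi_single c 0 1
  rw [uCoord_oddWeight_one _ ht, uCoord_oddWeight_one c ht, hsum]
  linarith

end oddWeight

theorem stmt6_general (r k : ℕ) (hkodd : k % 2 = 1)
    (a : ℕ) (har : a ≤ r - 2) (haodd : a % 2 = 1) :
    zD r k a ((k - 1) / 2) = zD r k a ((k - 1) / 2 + 1) := by
  have : NeZero ((a + 1) / 2) := ⟨by omega⟩
  have ht : 2 * ((a + 1) / 2) + 1 ≤ r := by omega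
  rw [zD_eq_sum_antidiagonalTuple har haodd, zD_eq_sum_antidiagonalTuple har haodd,
    sum_antidiagonalTuple_succ_of_vanish]
  · refine (sum_congr rfl fun c hc => ?_).symm
    exact qdimD_oddWeight_add_single c ht (by rw [mem_antidiagonalTuple.1 hc]; omega)
  · intro c hc hc0
    exact qdimD_oddWeight_eq_zero c ht hc0 (by rw [mem_antidiagonalTuple.1 hc]; omega)

/-- For odd level `k` with `s = (k-1)/2` and odd `a` with `3 ≤ a ≤ r-2`,
`z^{(a)}_s = z^{(a)}_{s+1}`. -/
theorem stmt6 (r k : ℕ) (hr : 4 ≤ r) (hk : 1 ≤ k) (hkodd : k % 2 = 1)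
    (a : ℕ) (ha3 : 3 ≤ a) (har : a ≤ r - 2) (haodd : a % 2 = 1) :
    zD r k a ((k - 1) / 2) = zD r k a ((k - 1) / 2 + 1) :=
  stmt6_general r k hkodd a har haodd
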